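/- arXiv:2601.04282 — 2 statements merged into one kernel-verified Lean document; each statement's English description precedes it below -/
import Mathlib

section
/- Let E be a finite-dimensional real normed vector space, P a finite-dimensional real normed vector space (the parameter space), and let t₀ < T be reals. Let f : ℝ × E × P → E be continuous, and suppose there is L ≥ 0 such that ‖f(t,x₁,θ) − f(t,x₂,θ)‖ ≤ L‖x₁ − x₂‖ for all t ∈ [t₀,T], all x₁,x₂ ∈ E, and all θ ∈ P. Suppose φ : E × P × ℝ → E is such that for every (x₀,θ), the curve t ↦ φ(x₀,θ,t) satisfies φ(x₀,θ,t₀) = x₀ and has derivative f(t, φ(x₀,θ,t), θ) at every t ∈ [t₀,T]. Then φ is jointly continuous on E × P × [t₀,T]. -/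
open Real Set Metric

/-- `gronwallBound` is bounded by a linear expression in `δ, ε` when `x ≤ X`. -/
lemma gron_aux {D ε K x X : ℝ} (hD : 0 ≤ D) (hε : 0 ≤ ε) (hK : 0 ≤ K) (hx : x ≤ X) :
    gronwallBound D K ε x ≤ D * Real.exp (K * X) + ε * gronwallBound 0 K 1 X := by
  by_cases hK0 : K = 0
  · subst hK0
    simp only [gronwallBound_K0]
    simp only [zero_mul, Real.exp_zero, mul_one, zero_add, one_mul]
    have := mul_le_mul_of_nonneg_left hx hε
    linarith
  · have hKpos : 0 < K := lt_of_le_of_ne hK (Ne.symm hK0)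
    simp only [gronwallBound_of_K_ne_0 hK0]
    have h1 : Real.exp (K * x) ≤ Real.exp (K * X) :=
      Real.exp_le_exp.2 (mul_le_mul_of_nonneg_left hx hK)
    have h2 : 0 < Real.exp (K * X) := Real.exp_pos _
    have h3 : (0 : ℝ) ≤ ε / K := div_nonneg hε hK
    have h4 : (0 : ℝ) ≤ 1 / K := by positivity
    have : ε / K = ε * (1 / K) := by ring
    nlinarith [mul_le_mul_of_nonneg_left h1 hD, mul_le_mul_of_nonneg_left h1 h3,
      Real.exp_pos (K * x)]

lemma gron_nonneg {K X : ℝ} (hK : 0 ≤ K) (hX : 0 ≤ X) :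
    0 ≤ gronwallBound 0 K 1 X := by
  by_cases hK0 : K = 0
  · subst hK0; simp [gronwallBound_K0, hX]
  · have hKpos : 0 < K := lt_of_le_of_ne hK (Ne.symm hK0)
    simp only [gronwallBound_of_K_ne_0 hK0]
    have : (1:ℝ) ≤ Real.exp (K * X) := by
      rw [← Real.exp_zero]; exact Real.exp_le_exp.2 (by positivity)
    have : 0 ≤ Real.exp (K * X) - 1 := by linarith
    positivity

/-- Continuity part of Theorem 1 (Smooth Neural ODE Trajectories): the solution map
`φ(x₀, θ, t)` of the parameterized ODE `x' = f(t, x, θ)`, `x(t₀) = x₀`, with `f` continuous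
and Lipschitz in `x` uniformly in `(t, θ)`, is jointly continuous on `E × P × [t₀, T]`. -/
theorem smooth_neural_ode_trajectories_continuity
    {E P : Type*} [NormedAddCommGroup E] [NormedSpace ℝ E] [FiniteDimensional ℝ E]
    [NormedAddCommGroup P] [NormedSpace ℝ P] [FiniteDimensional ℝ P]
    (t₀ T : ℝ) (ht : t₀ < T)
    (f : ℝ → E → P → E)
    (hf_cont : Continuous fun p : ℝ × E × P => f p.1 p.2.1 p.2.2)
    (L : ℝ) (hL : 0 ≤ L)
    (hf_lip : ∀ t ∈ Set.Icc t₀ T, ∀ (x₁ x₂ : E) (θ : P),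
      ‖f t x₁ θ - f t x₂ θ‖ ≤ L * ‖x₁ - x₂‖)
    (φ : E → P → ℝ → E)
    (hφ_init : ∀ (x₀ : E) (θ : P), φ x₀ θ t₀ = x₀)
    (hφ_deriv : ∀ (x₀ : E) (θ : P), ∀ t ∈ Set.Icc t₀ T,
      HasDerivAt (φ x₀ θ) (f t (φ x₀ θ t) θ) t) :
    ContinuousOn (fun p : E × P × ℝ => φ p.1 p.2.1 p.2.2)
      (Set.univ ×ˢ Set.univ ×ˢ Set.Icc t₀ T) := by
  -- basic facts
  have hcl : ∀ y₀ η, ContinuousOn (φ y₀ η) (Set.Icc t₀ T) := by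
    intro y₀ η s hs
    exact ((hφ_deriv y₀ η s hs).continuousAt).continuousWithinAt
  -- the clamp function
  set c : ℝ → ℝ := fun s => max t₀ (min s T) with hc
  have hc_cont : Continuous c := continuous_const.max (continuous_id.min continuous_const)
  have hc_mem : ∀ s, c s ∈ Set.Icc t₀ T :=
    fun s => ⟨le_max_left _ _, max_le ht.le (min_le_right _ _)⟩
  have hc_id : ∀ s ∈ Set.Icc t₀ T, c s = s := by
    intro s hs
    simp only [hc]
    rw [min_eq_left hs.2, max_eq_right hs.1]
  set K : NNReal := ⟨L, hL⟩ with hK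
  set X : ℝ := T - t₀ with hX
  have hXpos : 0 < X := by simp [hX]; linarith
  set A : ℝ := Real.exp (L * X) with hA
  have hApos : 0 < A := Real.exp_pos _
  set B : ℝ := gronwallBound 0 L 1 X with hB
  have hBnn : 0 ≤ B := gron_nonneg hL hXpos.le
  rintro ⟨x₀, θ, t⟩ ⟨-, -, htI⟩
  rw [Metric.continuousWithinAt_iff]
  intro ε hε
  set ε₀ : ℝ := ε / 3 with hε₀
  have hε₀pos : 0 < ε₀ := by positivity
  -- Tube lemma: find r₂ > 0 such that for dist η θ < r₂ and s ∈ Icc,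
  -- ‖f s (φ x₀ θ s) η - f s (φ x₀ θ s) θ‖ ≤ ε₀ / (B+1)
  set δ₀ : ℝ := ε₀ / (B + 1) with hδ₀
  have hδ₀pos : 0 < δ₀ := by positivity
  have hγ : Continuous (fun s => φ x₀ θ (c s)) :=
    (hcl x₀ θ).comp_continuous hc_cont hc_mem
  have hh : Continuous (fun q : ℝ × P =>
      ‖f q.1 (φ x₀ θ (c q.1)) q.2 - f q.1 (φ x₀ θ (c q.1)) θ‖) := by
    apply Continuous.norm
    apply Continuous.sub
    · exact hf_cont.comp ((continuous_fst).prodMk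
        ((hγ.comp continuous_fst).prodMk continuous_snd))
    · exact hf_cont.comp ((continuous_fst).prodMk
        ((hγ.comp continuous_fst).prodMk continuous_const))
  obtain ⟨u, v, hu, hv, hIu, hθv, huv⟩ :=
    generalized_tube_lemma isCompact_Icc (isCompact_singleton (x := θ))
      (hh.isOpen_preimage (Set.Iio δ₀) isOpen_Iio)
      (by
        rintro ⟨s, η⟩ ⟨hs, hη⟩
        simp only [Set.mem_singleton_iff] at hη
        subst hη
        simp [Set.mem_preimage, hδ₀pos])
  obtain ⟨r₂, hr₂pos, hr₂⟩ := Metric.isOpen_iff.1 hv θ (hθv rfl)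
  -- key bound via tube lemma
  have hmismatch : ∀ η, dist η θ < r₂ → ∀ s ∈ Set.Icc t₀ T,
      ‖f s (φ x₀ θ s) η - f s (φ x₀ θ s) θ‖ ≤ δ₀ := by
    intro η hη s hs
    have : (s, η) ∈ u ×ˢ v := ⟨hIu hs, hr₂ (mem_ball.2 hη)⟩
    have := huv this
    simp only [Set.mem_preimage, Set.mem_Iio] at this
    rw [hc_id s hs] at this
    exact this.le
  -- continuity in time of the reference trajectory
  have htc := hcl x₀ θ t htI
  rw [Metric.continuousWithinAt_iff] at htc
  obtain ⟨r₃, hr₃pos, hr₃⟩ := htc ε₀ hε₀pos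
  -- choose radius for initial condition
  set r₁ : ℝ := ε₀ / A with hr₁def
  have hr₁pos : 0 < r₁ := by positivity
  refine ⟨min r₁ (min r₂ r₃), by positivity, ?_⟩
  rintro ⟨y₀, η, s⟩ ⟨-, -, hsI⟩ hdist
  have hd1 : dist y₀ x₀ < r₁ := by
    calc dist y₀ x₀ ≤ dist ((y₀, η, s) : E × P × ℝ) (x₀, θ, t) := by
          rw [Prod.dist_eq]
          exact le_max_left _ _
      _ < _ := lt_of_lt_of_le hdist (min_le_left _ _)
  have hd2 : dist η θ < r₂ := by
    calc dist η θ ≤ dist ((y₀, η, s) : E × P × ℝ) (x₀, θ, t) := by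
          rw [Prod.dist_eq, Prod.dist_eq]
          exact le_max_of_le_right (le_max_left _ _)
      _ < _ := lt_of_lt_of_le hdist (le_trans (min_le_right _ _) (min_le_left _ _))
  have hd3 : dist s t < r₃ := by
    calc dist s t ≤ dist ((y₀, η, s) : E × P × ℝ) (x₀, θ, t) := by
          rw [Prod.dist_eq, Prod.dist_eq]
          exact le_max_of_le_right (le_max_right _ _)
      _ < _ := lt_of_lt_of_le hdist (le_trans (min_le_right _ _) (min_le_right _ _))
  -- Grönwall estimate between the two trajectories at time s
  have hgron : dist (φ x₀ θ s) (φ y₀ η s) ≤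
      gronwallBound (dist x₀ y₀) (K : ℝ) (δ₀ + 0) (s - t₀) := by
    have hv_lip : ∀ τ, LipschitzWith K (fun x => f (c τ) x η) := by
      intro τ
      apply LipschitzWith.of_dist_le_mul
      intro x₁ x₂
      rw [dist_eq_norm, dist_eq_norm]
      exact hf_lip (c τ) (hc_mem τ) x₁ x₂ η
    have key := dist_le_of_approx_trajectories_ODE (v := fun τ x => f (c τ) x η)
      (K := K) (f := φ x₀ θ) (g := φ y₀ η)
      (f' := fun τ => f τ (φ x₀ θ τ) θ) (g' := fun τ => f τ (φ y₀ η τ) η)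
      (a := t₀) (b := T) (εf := δ₀) (εg := 0) (δ := dist x₀ y₀)
      hv_lip (hcl x₀ θ)
      (fun τ hτ => ((hφ_deriv x₀ θ τ (Set.Ico_subset_Icc_self hτ)).hasDerivWithinAt))
      (fun τ hτ => by
        have hτ' := Set.Ico_subset_Icc_self hτ
        show dist (f τ (φ x₀ θ τ) θ) (f (c τ) (φ x₀ θ τ) η) ≤ δ₀
        rw [hc_id τ hτ', dist_eq_norm, norm_sub_rev]
        exact hmismatch η hd2 τ hτ')
      (hcl y₀ η)
      (fun τ hτ => ((hφ_deriv y₀ η τ (Set.Ico_subset_Icc_self hτ)).hasDerivWithinAt))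
      (fun τ hτ => by
        show dist (f τ (φ y₀ η τ) η) (f (c τ) (φ y₀ η τ) η) ≤ 0
        rw [hc_id τ (Set.Ico_subset_Icc_self hτ), dist_self])
      (by rw [hφ_init, hφ_init])
    exact key s hsI
  have hKL : (K : ℝ) = L := rfl
  rw [hKL, add_zero] at hgron
  have hgron2 : dist (φ x₀ θ s) (φ y₀ η s) ≤ dist x₀ y₀ * A + δ₀ * B := by
    refine hgron.trans ?_
    have := gron_aux (D := dist x₀ y₀) (ε := δ₀) (K := L) (x := s - t₀) (X := X)
      dist_nonneg hδ₀pos.le hL (by simp [hX]; linarith [hsI.2])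
    simpa [hA, hB] using this
  -- combine
  have hterm1 : dist x₀ y₀ * A < ε₀ := by
    rw [dist_comm] at hd1
    calc dist x₀ y₀ * A < r₁ * A := by
          exact mul_lt_mul_of_pos_right hd1 hApos
      _ = ε₀ := by rw [hr₁def, div_mul_cancel₀ _ hApos.ne']
  have hterm2 : δ₀ * B < ε₀ := by
    rw [hδ₀]
    rw [div_mul_eq_mul_div, div_lt_iff₀ (by linarith)]
    nlinarith
  have hterm3 : dist (φ x₀ θ s) (φ x₀ θ t) < ε₀ := hr₃ hsI hd3
  calc dist (φ y₀ η s) (φ x₀ θ t)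
      ≤ dist (φ y₀ η s) (φ x₀ θ s) + dist (φ x₀ θ s) (φ x₀ θ t) := dist_triangle _ _ _
    _ < (dist x₀ y₀ * A + δ₀ * B) + ε₀ := by
        rw [dist_comm (φ y₀ η s)]
        exact add_lt_add_of_le_of_lt hgron2 hterm3
    _ < ε₀ + ε₀ + ε₀ := by linarith
    _ = ε := by rw [hε₀]; ring
end

section
/- Let E and P be finite-dimensional real normed vector spaces, t₀ < T reals, and let f : ℝ × E × P → E be continuous such that for each t ∈ [t₀,T] the map (x,θ) ↦ f(t,x,θ) is differentiable, with partial derivatives D_x f(t,x,θ) : E →L E and D_θ f(t,x,θ) : P →L E depending continuously on (t,x,θ) and with ‖D_x f(t,x,θ)‖ ≤ L and ‖D_θ f(t,x,θ)‖ ≤ C for all t ∈ [t₀,T], x ∈ E, θ ∈ P. Fix x₀ ∈ E, and suppose φ : P × ℝ → E is such that for every θ ∈ P, φ(θ,t₀) = x₀ and t ↦ φ(θ,t) has derivative f(t, φ(θ,t), θ) at every t ∈ [t₀,T]. Then for every θ₀ ∈ P there exists a continuous family J : [t₀,T] → (P →L E) such that: (i) J(t₀) = 0; (ii) for every t ∈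 [t₀,T], the map θ ↦ φ(θ,t) is differentiable at θ₀ with derivative J(t); and (iii) J satisfies J'(t) = D_x f(t, φ(θ₀,t), θ₀) ∘ J(t) + D_θ f(t, φ(θ₀,t), θ₀) on [t₀,T]. -/
open Set MeasureTheory intervalIntegral Topology Metric Function

lemma abs_integral_abs_pow (n : ℕ) (x : ℝ) :
    |∫ r in (0:ℝ)..x, |r| ^ n| = |x| ^ (n + 1) / (n + 1) := by
  rcases le_or_gt 0 x with hx | hx
  · have h1 : ∫ r in (0:ℝ)..x, |r| ^ n = ∫ r in (0:ℝ)..x, r ^ n := by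
      apply intervalIntegral.integral_congr
      intro r hr
      rw [Set.uIcc_of_le hx] at hr
      simp only [abs_of_nonneg hr.1]
    rw [h1, integral_pow]
    rw [abs_of_nonneg hx]
    have hxp : (0:ℝ) ≤ (x ^ (n+1) - 0 ^ (n+1)) / (n + 1) := by
      have h1 : (0:ℝ) ≤ x ^ (n+1) := by positivity
      have h0 : (0:ℝ) ^ (n+1) = 0 := by simp
      rw [h0, sub_zero]
      have : (0:ℝ) < n + 1 := by positivity
      positivity
    rw [abs_of_nonneg hxp]
    simp
  · have h1 : ∫ r in (0:ℝ)..x, |r| ^ n = - ∫ r in x..(0:ℝ), |r| ^ n := by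
      rw [intervalIntegral.integral_symm]
    have h2 : ∫ r in x..(0:ℝ), |r| ^ n = ∫ r in x..(0:ℝ), (-r) ^ n := by
      apply intervalIntegral.integral_congr
      intro r hr
      rw [Set.uIcc_of_le hx.le] at hr
      simp only [abs_of_nonpos hr.2]
    have h3 : ∫ r in x..(0:ℝ), (-r) ^ n = ∫ r in (0:ℝ)..(-x), r ^ n := by
      simpa using intervalIntegral.integral_comp_neg (a := x) (b := 0) (fun r => r ^ n)
    rw [h1, h2, h3, integral_pow, abs_of_nonpos hx.le]
    have hxp : (0:ℝ) ≤ ((-x) ^ (n+1) - 0 ^ (n+1)) / (n + 1) := by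
      have h1 : (0:ℝ) ≤ (-x) ^ (n+1) := pow_nonneg (by linarith) _
      have h0 : (0:ℝ) ^ (n+1) = 0 := by simp
      rw [h0, sub_zero]
      have h2 : (0:ℝ) < n + 1 := by positivity
      exact div_nonneg h1 h2.le
    rw [abs_neg, abs_of_nonneg hxp]
    simp

lemma gronwallBound_zero_le {K ε s S : ℝ} (hK : 0 ≤ K) (hε : 0 ≤ ε) (hs : 0 ≤ s) (hsS : s ≤ S) :
    gronwallBound 0 K ε s ≤ ε * (S * Real.exp (K * S)) := by
  have hS : 0 ≤ S := hs.trans hsS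
  rcases eq_or_ne K 0 with h | h
  · rw [h, gronwallBound_K0]
    have h1 : Real.exp (0 * S) = 1 := by simp
    rw [h1]
    calc (0:ℝ) + ε * s ≤ ε * S := by nlinarith
    _ ≤ ε * (S * 1) := by rw [mul_one]
  · rw [gronwallBound_of_K_ne_0 h]
    have hKpos : 0 < K := lt_of_le_of_ne hK (Ne.symm h)
    have key : Real.exp (K * s) - 1 ≤ K * s * Real.exp (K * s) := by
      have h2 := Real.add_one_le_exp (-(K * s))
      have h3 : Real.exp (-(K * s)) * Real.exp (K * s) = 1 := by
        rw [← Real.exp_add]; simp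
      nlinarith [Real.exp_pos (K * s), Real.exp_pos (-(K * s))]
    have hmono : Real.exp (K * s) ≤ Real.exp (K * S) :=
      Real.exp_le_exp.2 (by nlinarith)
    calc 0 * Real.exp (K * s) + ε / K * (Real.exp (K * s) - 1)
        ≤ ε / K * (K * s * Real.exp (K * s)) := by
          rw [zero_mul, zero_add]
          apply mul_le_mul_of_nonneg_left key (by positivity)
      _ = ε * (s * Real.exp (K * s)) := by field_simp
      _ ≤ ε * (S * Real.exp (K * S)) := by
          apply mul_le_mul_of_nonneg_left _ hε
          have := Real.exp_pos (K * s)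
          nlinarith

lemma linear_ode_exists {M : Type*} [NormedAddCommGroup M] [NormedSpace ℝ M] [CompleteSpace M]
    (a b c : ℝ) (hab : a ≤ b) (hc : c ∈ Set.Icc a b) (g : ℝ → M → M)
    (hgc : Continuous fun p : ℝ × M => g p.1 p.2)
    (L : ℝ) (hL : 0 ≤ L) (hlip : ∀ t u v, ‖g t u - g t v‖ ≤ L * ‖u - v‖) :
    ∃ u : ℝ → M, Continuous u ∧ u c = 0 ∧
      ∀ t ∈ Set.Icc a b, HasDerivWithinAt u (g t (u t)) (Set.Icc a b) t := by
  haveI : Nonempty (Set.Icc a b) := ⟨⟨c, hc⟩⟩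
  set X := C(Set.Icc a b, M) with hX
  -- extension of a continuous map on Icc to ℝ
  have extcont : ∀ u : X, Continuous fun t : ℝ => u (Set.projIcc a b hab t) :=
    fun u => u.continuous.comp continuous_projIcc
  have integrand_cont : ∀ u : X, Continuous fun s : ℝ => g s (u (Set.projIcc a b hab s)) :=
    fun u => hgc.comp (continuous_id.prodMk (extcont u))
  -- the Picard operator
  have primcont : ∀ u : X, Continuous fun t : ℝ =>
      ∫ s in c..t, g s (u (Set.projIcc a b hab s)) := by
    intro u
    apply continuous_iff_continuousAt.2
    intro t
    exact (((integrand_cont u).integral_hasStrictDerivAt c t).hasDerivAt).continuousAt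
  set Φ : X → X := fun u => ⟨fun t : Set.Icc a b =>
      ∫ s in c..(t:ℝ), g s (u (Set.projIcc a b hab s)),
      (primcont u).comp continuous_subtype_val⟩ with hΦ
  -- key iterate estimate
  have key : ∀ n : ℕ, ∀ u v : X, ∀ t : Set.Icc a b,
      ‖(Φ^[n] u) t - (Φ^[n] v) t‖ ≤ L ^ n * |(t:ℝ) - c| ^ n / n.factorial * dist u v := by
    intro n
    induction n with
    | zero =>
      intro u v t
      simp only [Function.iterate_zero, id_eq, pow_zero, Nat.factorial_zero, Nat.cast_one,
        one_mul, mul_one, div_one]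
      rw [← dist_eq_norm]
      exact ContinuousMap.dist_apply_le_dist t
    | succ n ih =>
      intro u v t
      set U := Φ^[n] u with hU
      set V := Φ^[n] v with hV
      have hrw : Φ^[n+1] u = Φ U := by rw [Function.iterate_succ_apply']
      have hrw' : Φ^[n+1] v = Φ V := by rw [Function.iterate_succ_apply']
      rw [hrw, hrw']
      have hci : ∀ w : X, IntervalIntegrable
          (fun s => g s (w (Set.projIcc a b hab s))) volume c (t:ℝ) :=
        fun w => (integrand_cont w).intervalIntegrable _ _
      have hsub : (Φ U) t - (Φ V) t = ∫ s in c..(t:ℝ),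
          (g s (U (Set.projIcc a b hab s)) - g s (V (Set.projIcc a b hab s))) := by
        simp only [hΦ, ContinuousMap.coe_mk]
        exact (intervalIntegral.integral_sub (hci U) (hci V)).symm
      rw [hsub]
      -- bound function
      set k : ℝ := L ^ (n+1) / n.factorial * dist u v with hk
      have hk0 : 0 ≤ k := by positivity
      have hbd : ∀ s ∈ Set.uIoc c (t:ℝ),
          ‖g s (U (Set.projIcc a b hab s)) - g s (V (Set.projIcc a b hab s))‖
            ≤ k * |s - c| ^ n := by
        intro s hs
        have hsmem : s ∈ Set.Icc a b := by
          have h1 : s ∈ Set.uIcc c (t:ℝ) := Set.uIoc_subset_uIcc hs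
          have h2 : Set.uIcc c (t:ℝ) ⊆ Set.Icc a b :=
            Set.uIcc_subset_Icc hc t.2
          exact h2 h1
        have hproj : Set.projIcc a b hab s = ⟨s, hsmem⟩ := Set.projIcc_of_mem hab hsmem
        calc ‖g s (U (Set.projIcc a b hab s)) - g s (V (Set.projIcc a b hab s))‖
            ≤ L * ‖U (Set.projIcc a b hab s) - V (Set.projIcc a b hab s)‖ := hlip _ _ _
          _ ≤ L * (L ^ n * |s - c| ^ n / n.factorial * dist u v) := by
              apply mul_le_mul_of_nonneg_left _ hL
              rw [hproj]
              exact ih u v ⟨s, hsmem⟩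
          _ = k * |s - c| ^ n := by rw [hk]; ring
      have hbint : IntervalIntegrable (fun s => k * |s - c| ^ n) volume c (t:ℝ) :=
        (Continuous.mul continuous_const
          ((continuous_id.sub continuous_const).abs.pow n)).intervalIntegrable _ _
      have h1 : ‖∫ s in c..(t:ℝ),
          (g s (U (Set.projIcc a b hab s)) - g s (V (Set.projIcc a b hab s)))‖
            ≤ |∫ s in c..(t:ℝ), k * |s - c| ^ n| := by
        exact intervalIntegral.norm_integral_le_abs_of_norm_le
          ((ae_restrict_iff' measurableSet_uIoc).2 (Filter.Eventually.of_forall hbd)) hbint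
      have h2 : ∫ s in c..(t:ℝ), k * |s - c| ^ n
          = k * ∫ s in c..(t:ℝ), |s - c| ^ n := intervalIntegral.integral_const_mul _ _
      have h3 : ∫ s in c..(t:ℝ), |s - c| ^ n = ∫ r in (0:ℝ)..((t:ℝ) - c), |r| ^ n := by
        simpa using intervalIntegral.integral_comp_sub_right (a := c) (b := (t:ℝ))
          (fun r => |r| ^ n) c
      have h4 : |∫ s in c..(t:ℝ), k * |s - c| ^ n| = k * (|(t:ℝ) - c| ^ (n+1) / (n+1)) := by
        rw [h2, h3, abs_mul, abs_of_nonneg hk0, abs_integral_abs_pow]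
      calc ‖∫ s in c..(t:ℝ),
          (g s (U (Set.projIcc a b hab s)) - g s (V (Set.projIcc a b hab s)))‖
          ≤ k * (|(t:ℝ) - c| ^ (n+1) / (n+1)) := h1.trans_eq h4
        _ = L ^ (n+1) * |(t:ℝ) - c| ^ (n+1) / (n+1).factorial * dist u v := by
            rw [hk, Nat.factorial_succ]
            have hnf : (n.factorial : ℝ) ≠ 0 := Nat.cast_ne_zero.2 n.factorial_ne_zero
            push_cast
            field_simp
  -- contraction of some iterate
  have dist_iter : ∀ n : ℕ, ∀ u v : X,
      dist (Φ^[n] u) (Φ^[n] v) ≤ (L * (b - a)) ^ n / n.factorial * dist u v := by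
    intro n u v
    have h0 : 0 ≤ (L * (b - a)) ^ n / n.factorial * dist u v := by
      have : (0:ℝ) ≤ b - a := by linarith
      positivity
    rw [ContinuousMap.dist_le h0]
    intro t
    rw [dist_eq_norm]
    refine (key n u v t).trans ?_
    have habs : |(t:ℝ) - c| ≤ b - a := by
      have h1 := t.2.1; have h2 := t.2.2
      rw [abs_le]
      constructor
      · linarith [hc.2]
      · linarith [hc.1]
    calc L ^ n * |(t:ℝ) - c| ^ n / n.factorial * dist u v
        ≤ L ^ n * (b - a) ^ n / n.factorial * dist u v := by
          gcongr
      _ = (L * (b - a)) ^ n / n.factorial * dist u v := by rw [mul_pow]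
  obtain ⟨n, hn⟩ : ∃ n : ℕ, (L * (b - a)) ^ n / n.factorial < 1 := by
    have h := FloorSemiring.tendsto_pow_div_factorial_atTop (K := ℝ) (L * (b - a))
    exact (h.eventually (gt_mem_nhds one_pos)).exists
  set q : NNReal := Real.toNNReal ((L * (b - a)) ^ n / n.factorial) with hq
  have hval0 : (0:ℝ) ≤ (L * (b - a)) ^ n / n.factorial := by
    have h1 : (0:ℝ) ≤ L * (b - a) := mul_nonneg hL (by linarith)
    positivity
  have hcoe : (q : ℝ) = (L * (b - a)) ^ n / n.factorial := Real.coe_toNNReal _ hval0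
  have hq1 : q < 1 := by
    rw [← Real.toNNReal_one, hq]
    exact (Real.toNNReal_lt_toNNReal_iff one_pos).2 hn
  have hlipn : LipschitzWith q (Φ^[n]) :=
    LipschitzWith.of_dist_le_mul (fun u v => by rw [hcoe]; exact dist_iter n u v)
  have hcon : ContractingWith q (Φ^[n]) := ⟨hq1, hlipn⟩
  haveI : Nonempty X := ⟨0⟩
  set y : X := ContractingWith.fixedPoint (Φ^[n]) hcon with hy
  have hyfix : Function.IsFixedPt (Φ^[n]) y := hcon.fixedPoint_isFixedPt
  have hyΦ : Φ y = y := by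
    have h1 : Function.IsFixedPt (Φ^[n]) (Φ y) := by
      show Φ^[n] (Φ y) = Φ y
      rw [← Function.iterate_succ_apply, Function.iterate_succ_apply', hyfix]
    exact hcon.fixedPoint_unique h1
  refine ⟨fun t => y (Set.projIcc a b hab t), extcont y, ?_, ?_⟩
  · show y (Set.projIcc a b hab c) = 0
    have h1 : y (Set.projIcc a b hab c) = (Φ y) (Set.projIcc a b hab c) := by rw [hyΦ]
    rw [h1]
    simp only [hΦ, ContinuousMap.coe_mk]
    rw [Set.projIcc_of_mem hab hc]
    exact intervalIntegral.integral_same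
  · intro t htm
    have hcont : Continuous fun s : ℝ => g s (y (Set.projIcc a b hab s)) := integrand_cont y
    have hF : HasDerivAt (fun τ : ℝ => ∫ s in c..τ, g s (y (Set.projIcc a b hab s)))
        (g t (y (Set.projIcc a b hab t))) t :=
      (hcont.integral_hasStrictDerivAt c t).hasDerivAt
    have heq : ∀ s ∈ Set.Icc a b, y (Set.projIcc a b hab s)
        = ∫ σ in c..s, g σ (y (Set.projIcc a b hab σ)) := by
      intro s hs
      conv_lhs => rw [← hyΦ]
      simp only [hΦ, ContinuousMap.coe_mk, Set.projIcc_of_mem hab hs]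
      rfl
    exact (hF.hasDerivWithinAt).congr (fun s hs => heq s hs) (heq t htm)


lemma unif_small {E P W : Type*} [NormedAddCommGroup E] [NormedSpace ℝ E]
    [FiniteDimensional ℝ E] [NormedAddCommGroup P] [NormedSpace ℝ P] [FiniteDimensional ℝ P]
    [NormedAddCommGroup W]
    (K : Set ℝ) (hK : IsCompact K) (ψ : ℝ → E) (hψ : Continuous ψ) (θ₀ : P)
    (F : ℝ → E → P → W) (hF : Continuous fun p : ℝ × E × P => F p.1 p.2.1 p.2.2)
    (ε : ℝ) (hε : 0 < ε) :
    ∃ δ > 0, ∀ s ∈ K, ∀ (x : E) (θ : P), ‖x - ψ s‖ < δ → ‖θ - θ₀‖ < δ →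
      ‖F s x θ - F s (ψ s) θ₀‖ < ε := by
  set G : ℝ × E × P → W := fun p => F p.1 (ψ p.1 + p.2.1) p.2.2 - F p.1 (ψ p.1) θ₀ with hG
  have hGc : Continuous G := by
    apply Continuous.sub
    · exact hF.comp (continuous_fst.prodMk
        (((hψ.comp continuous_fst).add (continuous_fst.comp continuous_snd)).prodMk
          (continuous_snd.comp continuous_snd)))
    · exact hF.comp (continuous_fst.prodMk
        ((hψ.comp continuous_fst).prodMk continuous_const))
  set Kc : Set (ℝ × E × P) := K ×ˢ (closedBall (0:E) 1 ×ˢ closedBall θ₀ 1) with hKc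
  have hKcc : IsCompact Kc :=
    hK.prod ((isCompact_closedBall _ _).prod (isCompact_closedBall _ _))
  have hUC : UniformContinuousOn G Kc :=
    hKcc.uniformContinuousOn_of_continuous hGc.continuousOn
  rw [Metric.uniformContinuousOn_iff] at hUC
  obtain ⟨δ, hδ, hδ'⟩ := hUC ε hε
  refine ⟨min δ 1, lt_min hδ one_pos, ?_⟩
  intro s hs x θ hx hθ
  have hx1 : ‖x - ψ s‖ < δ := lt_of_lt_of_le hx (min_le_left _ _)
  have hθ1 : ‖θ - θ₀‖ < δ := lt_of_lt_of_le hθ (min_le_left _ _)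
  have hx2 : ‖x - ψ s‖ ≤ 1 := (lt_of_lt_of_le hx (min_le_right _ _)).le
  have hθ2 : ‖θ - θ₀‖ ≤ 1 := (lt_of_lt_of_le hθ (min_le_right _ _)).le
  have hp : (s, (x - ψ s, θ)) ∈ Kc := by
    refine ⟨hs, ?_, ?_⟩
    · simpa [Metric.mem_closedBall, dist_eq_norm] using hx2
    · simpa [Metric.mem_closedBall, dist_eq_norm] using hθ2
  have hq : (s, ((0:E), θ₀)) ∈ Kc := by
    refine ⟨hs, ?_, ?_⟩
    · simp
    · simp
  have hd : dist (s, (x - ψ s, θ)) (s, ((0:E), θ₀)) < δ := by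
    rw [Prod.dist_eq, Prod.dist_eq]
    simp only [dist_self, dist_eq_norm, sub_zero]
    exact max_lt hδ (max_lt hx1 hθ1)
  have := hδ' _ hp _ hq hd
  rw [dist_eq_norm] at this
  simp only [hG, add_sub_cancel, sub_self, sub_zero] at this
  simpa using this




set_option maxHeartbeats 2000000 in
/-- C¹-in-parameter part of Theorem 1 (Smooth Neural ODE Trajectories): if the vector field
`f` of the parameterized ODE `x' = f(t, x, θ)`, `x(t₀) = x₀`, is C¹ in `(x, θ)` with partial
derivatives `fx = ∂ₓf` and `fθ = ∂_θ f`, continuous in `(t, x, θ)` and uniformly bounded by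
`L` and `C`, then the solution is differentiable in `θ` and the parameter-Jacobian `J(t)`
solves `J'(t) = ∂ₓf(t, φ(θ₀, t), θ₀) ∘ J(t) + ∂_θ f(t, φ(θ₀, t), θ₀)` with `J(t₀) = 0`. -/
theorem smooth_neural_ode_trajectories_jacobian_parameter
    {E P : Type*} [NormedAddCommGroup E] [NormedSpace ℝ E] [FiniteDimensional ℝ E]
    [NormedAddCommGroup P] [NormedSpace ℝ P] [FiniteDimensional ℝ P]
    (t₀ T : ℝ) (ht : t₀ < T) (L C : ℝ)
    (f : ℝ → E → P → E) (fx : ℝ → E → P → E →L[ℝ] E) (fθ : ℝ → E → P → P →L[ℝ] E)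
    (hf_cont : Continuous fun p : ℝ × E × P => f p.1 p.2.1 p.2.2)
    (hfx_deriv : ∀ t ∈ Set.Icc t₀ T, ∀ (x : E) (θ : P),
      HasFDerivAt (fun x' : E => f t x' θ) (fx t x θ) x)
    (hfθ_deriv : ∀ t ∈ Set.Icc t₀ T, ∀ (x : E) (θ : P),
      HasFDerivAt (fun θ' : P => f t x θ') (fθ t x θ) θ)
    (hfx_cont : Continuous fun p : ℝ × E × P => fx p.1 p.2.1 p.2.2)
    (hfθ_cont : Continuous fun p : ℝ × E × P => fθ p.1 p.2.1 p.2.2)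
    (hfx_bound : ∀ t ∈ Set.Icc t₀ T, ∀ (x : E) (θ : P), ‖fx t x θ‖ ≤ L)
    (hfθ_bound : ∀ t ∈ Set.Icc t₀ T, ∀ (x : E) (θ : P), ‖fθ t x θ‖ ≤ C)
    (x₀ : E) (φ : P → ℝ → E)
    (hφ_init : ∀ θ : P, φ θ t₀ = x₀)
    (hφ_deriv : ∀ θ : P, ∀ t ∈ Set.Icc t₀ T, HasDerivAt (φ θ) (f t (φ θ t) θ) t)
    (θ₀ : P) :
    ∃ J : ℝ → P →L[ℝ] E,
      ContinuousOn J (Set.Icc t₀ T) ∧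
      J t₀ = 0 ∧
      (∀ t ∈ Set.Icc t₀ T, HasFDerivAt (fun θ : P => φ θ t) (J t) θ₀) ∧
      (∀ t ∈ Set.Icc t₀ T,
        HasDerivAt J ((fx t (φ θ₀ t) θ₀).comp (J t) + fθ t (φ θ₀ t) θ₀) t) := by
  have ht₀T : t₀ ∈ Set.Icc t₀ T := ⟨le_refl _, ht.le⟩
  have hL0 : 0 ≤ L := (norm_nonneg _).trans (hfx_bound t₀ ht₀T x₀ θ₀)
  have hC0 : 0 ≤ C := (norm_nonneg _).trans (hfθ_bound t₀ ht₀T x₀ θ₀)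
  -- clamp to [t₀, T]
  set π : ℝ → ℝ := fun t => max t₀ (min t T) with hπdef
  have hπcont : Continuous π := continuous_const.max (continuous_id.min continuous_const)
  have hπmem : ∀ t, π t ∈ Set.Icc t₀ T :=
    fun t => ⟨le_max_left _ _, max_le ht.le (min_le_right _ _)⟩
  have hπid : ∀ t ∈ Set.Icc t₀ T, π t = t := by
    intro t htm
    simp only [hπdef]
    rw [min_eq_left htm.2, max_eq_right htm.1]
  -- continuity of trajectories at points of Icc
  have hφc : ∀ θ : P, ∀ t ∈ Set.Icc t₀ T, ContinuousAt (φ θ) t :=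
    fun θ t htm => (hφ_deriv θ t htm).continuousAt
  have hψc : Continuous fun t => φ θ₀ (π t) :=
    continuous_iff_continuousAt.2 fun t => (hφc θ₀ _ (hπmem t)).comp hπcont.continuousAt
  -- the coefficients of the variational equation (extended to ℝ)
  set A : ℝ → E →L[ℝ] E := fun t => fx (π t) (φ θ₀ (π t)) θ₀ with hAdef
  set B : ℝ → P →L[ℝ] E := fun t => fθ (π t) (φ θ₀ (π t)) θ₀ with hBdef
  have hAcont : Continuous A :=
    hfx_cont.comp (hπcont.prodMk (hψc.prodMk continuous_const))
  have hBcont : Continuous B :=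
    hfθ_cont.comp (hπcont.prodMk (hψc.prodMk continuous_const))
  have hAeq : ∀ t ∈ Set.Icc t₀ T, A t = fx t (φ θ₀ t) θ₀ := by
    intro t htm; rw [hAdef]; simp only [hπid t htm]
  have hBeq : ∀ t ∈ Set.Icc t₀ T, B t = fθ t (φ θ₀ t) θ₀ := by
    intro t htm; rw [hBdef]; simp only [hπid t htm]
  have hAnorm : ∀ t, ‖A t‖ ≤ L := fun t => hfx_bound _ (hπmem t) _ _
  -- the linear vector field
  set g : ℝ → (P →L[ℝ] E) → (P →L[ℝ] E) := fun t u => (A t).comp u + B t with hgdef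
  have hgc : Continuous fun p : ℝ × (P →L[ℝ] E) => g p.1 p.2 :=
    ((hAcont.comp continuous_fst).clm_comp continuous_snd).add (hBcont.comp continuous_fst)
  have hglip : ∀ t u v, ‖g t u - g t v‖ ≤ L * ‖u - v‖ := by
    intro t u v
    have h1 : g t u - g t v = (A t).comp (u - v) := by
      ext z
      simp [hgdef, ContinuousLinearMap.sub_apply, ContinuousLinearMap.add_apply,
        ContinuousLinearMap.comp_apply, map_sub]
    rw [h1]
    exact ((A t).opNorm_comp_le (u - v)).trans
      (mul_le_mul_of_nonneg_right (hAnorm t) (norm_nonneg _))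
  -- solve the variational equation on [t₀ - 1, T + 1]
  obtain ⟨J, hJc, hJ0, hJd⟩ := linear_ode_exists (t₀ - 1) (T + 1) t₀ (by linarith)
    ⟨by linarith, by linarith⟩ g hgc L hL0 hglip
  have hODE : ∀ t ∈ Set.Icc t₀ T, HasDerivAt J ((A t).comp (J t) + B t) t := by
    intro t htm
    have hmem : Set.Icc (t₀ - 1) (T + 1) ∈ 𝓝 t :=
      Icc_mem_nhds (by linarith [htm.1]) (by linarith [htm.2])
    exact (hJd t ⟨by linarith [htm.1], by linarith [htm.2]⟩).hasDerivAt hmem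
  -- constants
  set S : ℝ := T - t₀ with hSdef
  have hS0 : 0 < S := by rw [hSdef]; linarith
  set G₀ : ℝ := S * Real.exp (L * S) with hG₀def
  have hG₀0 : 0 < G₀ := by positivity
  -- global Lipschitz bounds for f
  have hfLipx : ∀ s ∈ Set.Icc t₀ T, ∀ (θ : P) (x y : E),
      ‖f s x θ - f s y θ‖ ≤ L * ‖x - y‖ := by
    intro s hs θ x y
    exact (convex_univ).norm_image_sub_le_of_norm_hasFDerivWithin_le
      (fun z _ => (hfx_deriv s hs z θ).hasFDerivWithinAt)
      (fun z _ => hfx_bound s hs z θ) (Set.mem_univ y) (Set.mem_univ x)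
  have hfLipθ : ∀ s ∈ Set.Icc t₀ T, ∀ (x : E) (θ η : P),
      ‖f s x θ - f s x η‖ ≤ C * ‖θ - η‖ := by
    intro s hs x θ η
    exact (convex_univ).norm_image_sub_le_of_norm_hasFDerivWithin_le
      (fun z _ => (hfθ_deriv s hs x z).hasFDerivWithinAt)
      (fun z _ => hfθ_bound s hs x z) (Set.mem_univ η) (Set.mem_univ θ)
  -- first Grönwall estimate: Lipschitz dependence of the solution on θ
  have hw : ∀ θ : P, ∀ s ∈ Set.Icc t₀ T, ‖φ θ s - φ θ₀ s‖ ≤ C * G₀ * ‖θ - θ₀‖ := by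
    intro θ s hs
    have hcont : ContinuousOn (fun s => φ θ s - φ θ₀ s) (Set.Icc t₀ T) :=
      fun z hz => (((hφc θ z hz).sub (hφc θ₀ z hz))).continuousWithinAt
    have hderiv : ∀ z ∈ Set.Ico t₀ T, HasDerivWithinAt (fun s => φ θ s - φ θ₀ s)
        (f z (φ θ z) θ - f z (φ θ₀ z) θ₀) (Set.Ici z) z := fun z hz =>
      (((hφ_deriv θ z (Set.Ico_subset_Icc_self hz)).sub
        (hφ_deriv θ₀ z (Set.Ico_subset_Icc_self hz)))).hasDerivWithinAt
    have h0 : ‖φ θ t₀ - φ θ₀ t₀‖ ≤ 0 := by rw [hφ_init θ, hφ_init θ₀]; simp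
    have hbound : ∀ z ∈ Set.Ico t₀ T,
        ‖f z (φ θ z) θ - f z (φ θ₀ z) θ₀‖ ≤ L * ‖φ θ z - φ θ₀ z‖ + C * ‖θ - θ₀‖ := by
      intro z hz
      have hz' := Set.Ico_subset_Icc_self hz
      have tri : f z (φ θ z) θ - f z (φ θ₀ z) θ₀ =
          (f z (φ θ z) θ - f z (φ θ₀ z) θ) + (f z (φ θ₀ z) θ - f z (φ θ₀ z) θ₀) := by abel
      rw [tri]
      exact (norm_add_le _ _).trans (add_le_add (hfLipx z hz' θ _ _) (hfLipθ z hz' _ θ θ₀))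
    have hgr := norm_le_gronwallBound_of_norm_deriv_right_le hcont hderiv h0 hbound s hs
    have hgb := gronwallBound_zero_le (K := L) (ε := C * ‖θ - θ₀‖) (s := s - t₀) (S := S)
      hL0 (by positivity) (by linarith [hs.1]) (by rw [hSdef]; linarith [hs.2])
    refine hgr.trans (hgb.trans ?_)
    rw [← hG₀def]; ring_nf; exact le_refl _
  -- differentiability in the parameter
  have hFD : ∀ t₁ ∈ Set.Icc t₀ T, HasFDerivAt (fun θ : P => φ θ t₁) (J t₁) θ₀ := by
    intro t₁ ht₁
    rw [hasFDerivAt_iff_isLittleO_nhds_zero, Asymptotics.isLittleO_iff]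
    intro c hc
    set ε : ℝ := c / ((C * G₀ + 1) * (G₀ + 1)) with hεdef
    have hεpos : 0 < ε := by positivity
    obtain ⟨δ₁, hδ₁, hUx⟩ := unif_small (Set.Icc t₀ T) isCompact_Icc
      (fun s => φ θ₀ (π s)) hψc θ₀ fx hfx_cont ε hεpos
    obtain ⟨δ₂, hδ₂, hUθ⟩ := unif_small (Set.Icc t₀ T) isCompact_Icc
      (fun s => φ θ₀ (π s)) hψc θ₀ fθ hfθ_cont ε hεpos
    set δ : ℝ := min δ₁ δ₂ with hδdef
    have hδpos : 0 < δ := lt_min hδ₁ hδ₂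
    set δ' : ℝ := min δ (δ / (C * G₀ + 1)) with hδ'def
    have hδ'pos : 0 < δ' := lt_min hδpos (by positivity)
    filter_upwards [Metric.ball_mem_nhds (0 : P) hδ'pos] with h hh
    set θ : P := θ₀ + h with hθdef
    have hθsub : θ - θ₀ = h := by rw [hθdef]; abel
    have hnorm : ‖θ - θ₀‖ = ‖h‖ := by rw [hθsub]
    have hsmall : ‖θ - θ₀‖ < δ' := by
      rw [hnorm]; simpa [dist_eq_norm] using hh
    have hsmallδ : ‖θ - θ₀‖ < δ := hsmall.trans_le (min_le_left _ _)
    have hsmallδ₁ : ‖θ - θ₀‖ < δ₁ := hsmallδ.trans_le (min_le_left _ _)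
    have hsmallδ₂ : ‖θ - θ₀‖ < δ₂ := hsmallδ.trans_le (min_le_right _ _)
    have hwsmall : ∀ s ∈ Set.Icc t₀ T, ‖φ θ s - φ θ₀ s‖ < δ := by
      intro s hs
      have h1 : ‖θ - θ₀‖ < δ / (C * G₀ + 1) := hsmall.trans_le (min_le_right _ _)
      have h2 : ‖θ - θ₀‖ * (C * G₀ + 1) < δ := by
        rwa [lt_div_iff₀ (by positivity)] at h1
      have h3 := hw θ s hs
      nlinarith [norm_nonneg (θ - θ₀)]
    set r : ℝ → E := fun s => φ θ s - φ θ₀ s - (J s) (θ - θ₀) with hrdef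
    have hrcont : ContinuousOn r (Set.Icc t₀ T) := fun z hz =>
      (((hφc θ z hz).sub (hφc θ₀ z hz)).sub
        ((hJc.clm_apply continuous_const).continuousAt)).continuousWithinAt
    have hr0 : ‖r t₀‖ ≤ 0 := by
      rw [hrdef]; simp [hφ_init θ, hφ_init θ₀, hJ0]
    have hrderiv : ∀ z ∈ Set.Ico t₀ T, HasDerivWithinAt r
        (f z (φ θ z) θ - f z (φ θ₀ z) θ₀ - ((A z).comp (J z) + B z) (θ - θ₀))
        (Set.Ici z) z := by
      intro z hz
      have hz' := Set.Ico_subset_Icc_self hz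
      have h1 : HasDerivAt (fun s => (J s) (θ - θ₀)) (((A z).comp (J z) + B z) (θ - θ₀)) z := by
        have h2 := (hODE z hz').clm_apply (hasDerivAt_const z (θ - θ₀))
        simpa using h2
      exact (((hφ_deriv θ z hz').sub (hφ_deriv θ₀ z hz')).sub h1).hasDerivWithinAt
    have hrbound : ∀ z ∈ Set.Ico t₀ T,
        ‖f z (φ θ z) θ - f z (φ θ₀ z) θ₀ - ((A z).comp (J z) + B z) (θ - θ₀)‖
          ≤ L * ‖r z‖ + ε * (C * G₀ + 1) * ‖θ - θ₀‖ := by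
      intro z hz
      have hz' := Set.Ico_subset_Icc_self hz
      set a₁ : E := f z (φ θ z) θ - f z (φ θ₀ z) θ - (fx z (φ θ₀ z) θ₀) (φ θ z - φ θ₀ z)
        with ha₁
      set a₂ : E := f z (φ θ₀ z) θ - f z (φ θ₀ z) θ₀ - (fθ z (φ θ₀ z) θ₀) (θ - θ₀) with ha₂
      have hsplit : f z (φ θ z) θ - f z (φ θ₀ z) θ₀ - ((A z).comp (J z) + B z) (θ - θ₀)
          = a₁ + a₂ + (fx z (φ θ₀ z) θ₀) (r z) := by
        rw [hAeq z hz', hBeq z hz', hrdef, ha₁, ha₂]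
        simp only [ContinuousLinearMap.add_apply, ContinuousLinearMap.comp_apply, map_sub]
        abel
      have hmemball : φ θ z ∈ Metric.ball (φ θ₀ z) δ₁ := by
        rw [Metric.mem_ball, dist_eq_norm]
        exact (hwsmall z hz').trans_le (min_le_left _ _)
      have hmean₁ : ‖a₁‖ ≤ ε * ‖φ θ z - φ θ₀ z‖ := by
        have hd : ∀ u ∈ Metric.ball (φ θ₀ z) δ₁, HasFDerivWithinAt
            (fun x => f z x θ - (fx z (φ θ₀ z) θ₀) x)
            (fx z u θ - fx z (φ θ₀ z) θ₀) (Metric.ball (φ θ₀ z) δ₁) u := fun u _ =>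
          ((hfx_deriv z hz' u θ).sub ((fx z (φ θ₀ z) θ₀).hasFDerivAt)).hasFDerivWithinAt
        have hb : ∀ u ∈ Metric.ball (φ θ₀ z) δ₁,
            ‖fx z u θ - fx z (φ θ₀ z) θ₀‖ ≤ ε := by
          intro u hu
          have hu' : ‖u - φ θ₀ z‖ < δ₁ := by
            rw [Metric.mem_ball, dist_eq_norm] at hu; exact hu
          have h5 := hUx z hz' u θ (by rw [hπid z hz']; exact hu') hsmallδ₁
          rw [hπid z hz'] at h5
          exact h5.le
        have h2 := (convex_ball _ _).norm_image_sub_le_of_norm_hasFDerivWithin_le hd hb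
          (Metric.mem_ball_self hδ₁) hmemball
        have ha : a₁ = (f z (φ θ z) θ - (fx z (φ θ₀ z) θ₀) (φ θ z))
            - (f z (φ θ₀ z) θ - (fx z (φ θ₀ z) θ₀) (φ θ₀ z)) := by
          rw [ha₁, map_sub]; abel
        rw [ha]
        exact h2
      have hmean₂ : ‖a₂‖ ≤ ε * ‖θ - θ₀‖ := by
        have hd : ∀ η ∈ Metric.ball θ₀ δ₂, HasFDerivWithinAt
            (fun η' : P => f z (φ θ₀ z) η' - (fθ z (φ θ₀ z) θ₀) η')
            (fθ z (φ θ₀ z) η - fθ z (φ θ₀ z) θ₀) (Metric.ball θ₀ δ₂) η := fun η _ =>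
          ((hfθ_deriv z hz' (φ θ₀ z) η).sub
            ((fθ z (φ θ₀ z) θ₀).hasFDerivAt)).hasFDerivWithinAt
        have hb : ∀ η ∈ Metric.ball θ₀ δ₂,
            ‖fθ z (φ θ₀ z) η - fθ z (φ θ₀ z) θ₀‖ ≤ ε := by
          intro η hη
          have hη' : ‖η - θ₀‖ < δ₂ := by
            rw [Metric.mem_ball, dist_eq_norm] at hη; exact hη
          have h5 := hUθ z hz' (φ θ₀ z) η (by rw [hπid z hz']; simp [hδ₂]) hη'
          rw [hπid z hz'] at h5
          exact h5.le
        have hθball : θ ∈ Metric.ball θ₀ δ₂ := by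
          rw [Metric.mem_ball, dist_eq_norm]; exact hsmallδ₂
        have h2 := (convex_ball _ _).norm_image_sub_le_of_norm_hasFDerivWithin_le hd hb
          (Metric.mem_ball_self hδ₂) hθball
        have ha : a₂ = (f z (φ θ₀ z) θ - (fθ z (φ θ₀ z) θ₀) θ)
            - (f z (φ θ₀ z) θ₀ - (fθ z (φ θ₀ z) θ₀) θ₀) := by
          rw [ha₂, map_sub]; abel
        rw [ha]
        exact h2
      rw [hsplit]
      have htri : ‖a₁ + a₂ + (fx z (φ θ₀ z) θ₀) (r z)‖
          ≤ ‖a₁‖ + ‖a₂‖ + ‖(fx z (φ θ₀ z) θ₀) (r z)‖ :=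
        (norm_add_le _ _).trans (add_le_add_left (norm_add_le _ _) _)
      have hAr : ‖(fx z (φ θ₀ z) θ₀) (r z)‖ ≤ L * ‖r z‖ :=
        ((fx z (φ θ₀ z) θ₀).le_opNorm _).trans
          (mul_le_mul_of_nonneg_right (hfx_bound z hz' _ _) (norm_nonneg _))
      have hwz := hw θ z hz'
      have h6 : ε * ‖φ θ z - φ θ₀ z‖ ≤ ε * (C * G₀ * ‖θ - θ₀‖) :=
        mul_le_mul_of_nonneg_left hwz hεpos.le
      calc ‖a₁ + a₂ + (fx z (φ θ₀ z) θ₀) (r z)‖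
          ≤ ‖a₁‖ + ‖a₂‖ + ‖(fx z (φ θ₀ z) θ₀) (r z)‖ := htri
        _ ≤ ε * (C * G₀ * ‖θ - θ₀‖) + ε * ‖θ - θ₀‖ + L * ‖r z‖ :=
            add_le_add (add_le_add (hmean₁.trans h6) hmean₂) hAr
        _ = L * ‖r z‖ + ε * (C * G₀ + 1) * ‖θ - θ₀‖ := by ring
    have hgr := norm_le_gronwallBound_of_norm_deriv_right_le hrcont hrderiv hr0 hrbound t₁ ht₁
    have hgb := gronwallBound_zero_le (K := L) (ε := ε * (C * G₀ + 1) * ‖θ - θ₀‖)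
      (s := t₁ - t₀) (S := S) hL0 (by positivity) (by linarith [ht₁.1])
      (by rw [hSdef]; linarith [ht₁.2])
    show ‖φ (θ₀ + h) t₁ - φ θ₀ t₁ - (J t₁) h‖ ≤ c * ‖h‖
    have hrt : φ (θ₀ + h) t₁ - φ θ₀ t₁ - (J t₁) h = r t₁ := by
      rw [hrdef, hθsub, hθdef]
    rw [hrt, ← hnorm]
    refine (hgr.trans hgb).trans ?_
    have hkey : ε * ((C * G₀ + 1) * (G₀ + 1)) = c := by
      rw [hεdef]; field_simp
    rw [← hG₀def]
    nlinarith [norm_nonneg (θ - θ₀), hεpos.le, hG₀0.le, hC0,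
      mul_nonneg (mul_nonneg hεpos.le (by positivity : (0:ℝ) ≤ C * G₀ + 1)) (norm_nonneg (θ - θ₀))]
  refine ⟨J, hJc.continuousOn, hJ0, hFD, ?_⟩
  intro t htm
  have h9 := hODE t htm
  rwa [hAeq t htm, hBeq t htm] at h9
end
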